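/- arXiv:2511.19354 — 5 statements merged into one kernel-verified Lean document; each statement's English description precedes it below -/
import Mathlib

section
/- A function f : βℕ → βℕ is continuous if and only if there exist g : ℕ × ℕ → ℕ and v ∈ βℕ such that f(u) = Ultrafilter.map g (u ⊗ v) for every u ∈ βℕ. Moreover, if f is continuous and v ∈ βℕ satisfies f(n) ≤_RK v for every n ∈ ℕ, then there exists g : ℕ × ℕ → ℕ with f(u) = Ultrafilter.map g (u ⊗ v) for all u ∈ βℕ. -/
/-- The tensor (Fubini) product of ultrafilters: `S ∈ tensor u v` iff
`{x | {y | (x, y) ∈ S} ∈ v} ∈ u`. -/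
def tensor {X Y : Type*} (u : Ultrafilter X) (v : Ultrafilter Y) : Ultrafilter (X × Y) :=
  u.bind fun x => v.map fun y => (x, y)

/-- The Rudin–Keisler preorder: `u ≤_RK v` iff `u` is the image of `v` under some map. -/
def RKLE {X Y : Type*} (u : Ultrafilter X) (v : Ultrafilter Y) : Prop :=
  ∃ f : Y → X, Ultrafilter.map f v = u

/-- Isomorphism of ultrafilters: image under a bijection. -/
def UIso {X Y : Type*} (u : Ultrafilter X) (v : Ultrafilter Y) : Prop :=
  ∃ f : Y → X, Function.Bijective f ∧ Ultrafilter.map f v = u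

/-- An ultrafilter is principal iff it is `pure x` for some point `x`. -/
def IsPrincipal {X : Type*} (u : Ultrafilter X) : Prop := ∃ x, u = pure x

/-- A weak P-point: a nonprincipal ultrafilter on `ℕ` not in the closure of any countable
set of ultrafilters avoiding it and all principal ultrafilters. -/
def WeakPPoint (u : Ultrafilter ℕ) : Prop :=
  ¬ IsPrincipal u ∧ ∀ A : Set (Ultrafilter ℕ), A.Countable → u ∉ A →
    (∀ x ∈ A, ¬ IsPrincipal x) → u ∉ closure A

/-- A space `Z` is `u`-compact iff every pushforward of `u` to `Z` converges. -/
def UCompact {X : Type*} (u : Ultrafilter X) (Z : Type*) [TopologicalSpace Z] : Prop :=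
  ∀ f : X → Z, ∃ z : Z, ↑(Ultrafilter.map f u) ≤ nhds z

/-- The Comfort preorder: `u ≤_C v` iff every `v`-compact space is `u`-compact. -/
def ComfortLE {X Y : Type*} (u : Ultrafilter X) (v : Ultrafilter Y) : Prop :=
  ∀ (Z : Type*) [TopologicalSpace Z], UCompact v Z → UCompact u Z

/-!
Both `f` and `u ↦ g(u ⊗ v)` are continuous, so they agree as soon as they agree on the dense set
of principal ultrafilters; since `n ⊗ v` is the image of `v` under `m ↦ (n, m)`, this asks exactly
for `f(n) = g(n, ·)(v)`, i.e. for witnesses of `f(n) ≤_RK v`. Such a `v` exists for any countable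
family: the product of the `f(n)` restricted to finitely supported sequences, a countable set,
still has the finite intersection property, and each `f(n)` is its image under evaluation at `n`.
-/

open Ultrafilter Filter

section Tensor

variable {X Y Z : Type*}

theorem tensor_pure_left (x : X) (v : Ultrafilter Y) :
    tensor (pure x) v = v.map fun y => (x, y) := by
  ext s
  rfl

theorem continuous_map_tensor (g : X × Y → Z) (v : Ultrafilter Y) :
    Continuous fun u : Ultrafilter X => (tensor u v).map g := by
  rw [continuous_generateFrom_iff]
  rintro _ ⟨A, rfl⟩
  exact ultrafilter_isOpen_basic {x | (fun y => g (x, y)) ⁻¹' A ∈ v}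

theorem exists_eq_map_tensor_of_continuous {f : Ultrafilter X → Ultrafilter Z}
    (hf : Continuous f) {v : Ultrafilter Y} (hv : ∀ x, RKLE (f (pure x)) v) :
    ∃ g : X × Y → Z, ∀ u, f u = (tensor u v).map g := by
  choose h hh using hv
  refine ⟨fun p => h p.1 p.2, congrFun ?_⟩
  refine denseRange_pure.equalizer hf (continuous_map_tensor _ v) (funext fun x => ?_)
  simp only [Function.comp_apply, tensor_pure_left, Ultrafilter.map_map]
  exact (hh x).symm

end Tensor

theorem exists_ultrafilter_finsupp_map_eval {ι X : Type*} [Zero X] (u : ι → Ultrafilter X) :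
    ∃ w : Ultrafilter (ι →₀ X), ∀ i, w.map (fun p => p i) = u i := by
  classical
  let F : Filter (ι →₀ X) := comap (⇑) (Filter.pi fun i => (u i : Filter X))
  have : F.NeBot := by
    refine comap_neBot_iff.2 fun t ht => ?_
    obtain ⟨I, hI, s, hs, hst⟩ := mem_pi.1 ht
    choose a ha using fun i => (u i).nonempty_of_mem (hs i)
    refine ⟨Finsupp.indicator hI.toFinset fun i _ => a i, hst fun i hi => ?_⟩
    rw [Finsupp.indicator_of_mem (hI.mem_toFinset.2 hi)]
    exact ha i
  refine ⟨Ultrafilter.of F, fun i => ?_⟩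
  rw [← Ultrafilter.coe_le_coe, Ultrafilter.coe_map]
  exact ((tendsto_eval_pi _ i).comp tendsto_comap).mono_left (Ultrafilter.of_le _)

theorem exists_rkle_of_countable {ι : Type*} [Countable ι] (u : ι → Ultrafilter ℕ) :
    ∃ v : Ultrafilter ℕ, ∀ i, RKLE (u i) v := by
  obtain ⟨w, hw⟩ := exists_ultrafilter_finsupp_map_eval u
  obtain ⟨j, hj⟩ := Countable.exists_injective_nat (ι →₀ ℕ)
  refine ⟨w.map j, fun i => ⟨fun n => Function.invFun j n i, ?_⟩⟩
  rw [Ultrafilter.map_map, ← hw i]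
  congr 1
  funext p
  simp [Function.leftInverse_invFun hj p]

theorem stmt0 (f : Ultrafilter ℕ → Ultrafilter ℕ) :
    (Continuous f ↔ ∃ g : ℕ × ℕ → ℕ, ∃ v : Ultrafilter ℕ,
      ∀ u : Ultrafilter ℕ, f u = Ultrafilter.map g (tensor u v)) ∧
    (Continuous f → ∀ v : Ultrafilter ℕ, (∀ n : ℕ, RKLE (f (pure n)) v) →
      ∃ g : ℕ × ℕ → ℕ, ∀ u : Ultrafilter ℕ, f u = Ultrafilter.map g (tensor u v)) := by
  refine ⟨⟨fun hf => ?_, fun ⟨g, v, hg⟩ => ?_⟩,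
    fun hf v hv => exists_eq_map_tensor_of_continuous hf hv⟩
  · obtain ⟨v, hv⟩ := exists_rkle_of_countable fun n => f (pure n)
    obtain ⟨g, hg⟩ := exists_eq_map_tensor_of_continuous hf hv
    exact ⟨g, v, hg⟩
  · rw [show f = _ from funext hg]
    exact continuous_map_tensor g v
end

section
/- Let u ∈ βℕ and let A ⊆ βℕ be countable. The following are equivalent: (i) u ∈ closure(A); (ii) there exist f : ℕ → βℕ with range f ⊆ A and v ∈ βℕ such that f̃(v) = u; (iii) there exist g : ℕ × ℕ → ℕ and v, w ∈ βℕ such that Ultrafilter.map (fun j => g (i, j)) w ∈ A for every i ∈ ℕ and u = Ultrafilter.map g (v ⊗ w). Moreover, if u ∈ closure(A) and f : ℕ → βℕ satisfies range f = A, then there exists v ∈ βℕ with f̃(v) = u. -/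
/-!
The limit of `f : ℕ → βℕ` along `v` is the `v`-sum `v.bind f`, in which `S` is large iff
`{n | S ∈ f n} ∈ v`; and `closure (range f) = range f̃`, since `f̃` is a continuous map on the
compact space `βℕ`. Enumerating the countable set `A` gives (i) ⇔ (ii) and the last assertion.

For (iii), the countably many ultrafilters `f i` are Rudin–Keisler below one ultrafilter `w`:
the `D`-sum over `k`, for `D` containing all final segments of `ℕ`, of the tensor products
`f 0 ⊗ ⋯ ⊗ f (k - 1)` on finite sequences, whose `i`-th coordinate is distributed as `f i`
because `i < k` for `D`-almost all `k`. If `g (i, ·)` pushes `w` forward to `f i`, then `g`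
pushes `v ⊗ w` forward to `v.bind f`.
-/

open Filter Set

namespace Ultrafilter

variable {α β γ : Type*}

theorem mem_bind {u : Ultrafilter α} {m : α → Ultrafilter β} {s : Set β} :
    s ∈ u.bind m ↔ {x | s ∈ m x} ∈ u :=
  Iff.rfl

theorem map_bind (h : β → γ) (u : Ultrafilter α) (m : α → Ultrafilter β) :
    map h (u.bind m) = u.bind fun x => map h (m x) :=
  rfl

theorem bind_eq_of_eventually_eq {u : Ultrafilter α} {m : α → Ultrafilter β}
    {q : Ultrafilter β} (h : ∀ᶠ x in u, m x = q) : u.bind m = q := by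
  ext s
  rw [mem_bind]
  constructor
  · intro hs
    obtain ⟨x, hxq, hxs⟩ := (h.and hs).exists
    exact hxq ▸ hxs
  · intro hs
    exact h.mono fun x hx => hx ▸ hs

theorem extend_eq_bind (f : α → Ultrafilter β) (v : Ultrafilter α) :
    Ultrafilter.extend f v = v.bind f := by
  rw [ultrafilter_extend_eq_iff, ultrafilter_converges_iff]
  rfl

theorem closure_range_eq_range_extend [TopologicalSpace γ] [T2Space γ] [CompactSpace γ]
    (f : α → γ) : closure (range f) = range (Ultrafilter.extend f) := by
  have hclosed : IsClosed (range (Ultrafilter.extend f)) :=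
    (isCompact_range (continuous_ultrafilter_extend f)).isClosed
  refine (closure_minimal ?_ hclosed).antisymm ?_
  · rintro _ ⟨a, rfl⟩
    exact ⟨pure a, ultrafilter_extend_pure f a⟩
  · rintro _ ⟨v, rfl⟩
    exact mem_closure_of_tendsto (ultrafilter_extend_eq_iff.mp rfl)
      (Eventually.of_forall mem_range_self)

end Ultrafilter

open Ultrafilter

section Tensor

variable {X Y Z : Type*}

theorem map_tensor (g : X × Y → Z) (u : Ultrafilter X) (v : Ultrafilter Y) :
    Ultrafilter.map g (tensor u v) = u.bind fun x => Ultrafilter.map (fun y => g (x, y)) v :=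
  rfl

theorem map_fst_tensor (u : Ultrafilter X) (v : Ultrafilter Y) :
    Ultrafilter.map Prod.fst (tensor u v) = u := by
  have hconst (x : X) : Ultrafilter.map (fun _ => x) v = pure x := coe_injective map_const
  rw [map_tensor]
  simp only [hconst]
  exact bind_pure u

theorem map_snd_tensor (u : Ultrafilter X) (v : Ultrafilter Y) :
    Ultrafilter.map Prod.snd (tensor u v) = v := by
  rw [map_tensor]
  exact bind_eq_of_eventually_eq (Eventually.of_forall fun _ => map_id' v)

theorem map_tensor_eq_extend (g : X × Y → Z) (v : Ultrafilter X) (w : Ultrafilter Y) :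
    Ultrafilter.map g (tensor v w) =
      Ultrafilter.extend (fun i => Ultrafilter.map (fun j => g (i, j)) w) v := by
  rw [extend_eq_bind, map_tensor]

end Tensor

section CommonUpperBound

variable {α : Type*}

noncomputable def listTensor : (ℕ → Ultrafilter α) → ℕ → Ultrafilter (List α)
  | _, 0 => pure []
  | f, k + 1 => Ultrafilter.map (fun p : α × List α => p.1 :: p.2)
      (tensor (f 0) (listTensor (fun n => f (n + 1)) k))

theorem map_getD_listTensor (a : α) :
    ∀ (k : ℕ) (f : ℕ → Ultrafilter α) (i : ℕ), i < k →
      Ultrafilter.map (fun l => l.getD i a) (listTensor f k) = f i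
  | 0, _, _, hi => absurd hi (Nat.not_lt_zero _)
  | k + 1, f, 0, _ => by
    rw [listTensor, Ultrafilter.map_map]
    exact map_fst_tensor _ _
  | k + 1, f, i + 1, hi => by
    rw [listTensor, Ultrafilter.map_map]
    change Ultrafilter.map ((fun l : List α => l.getD i a) ∘ Prod.snd) _ = _
    rw [← Ultrafilter.map_map, map_snd_tensor,
      map_getD_listTensor a k (fun n => f (n + 1)) i (Nat.lt_of_succ_lt_succ hi)]

theorem exists_map_getD_eq (f : ℕ → Ultrafilter α) (a : α) :
    ∃ w : Ultrafilter (List α), ∀ i, Ultrafilter.map (fun l => l.getD i a) w = f i := by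
  let D : Ultrafilter ℕ := Ultrafilter.of atTop
  refine ⟨D.bind (listTensor f), fun i => ?_⟩
  have hD : ∀ᶠ k in D, i < k := Ultrafilter.of_le atTop (eventually_gt_atTop i)
  rw [Ultrafilter.map_bind]
  exact bind_eq_of_eventually_eq (hD.mono fun k hk => map_getD_listTensor a k f i hk)

end CommonUpperBound

theorem exists_map_section_eq (f : ℕ → Ultrafilter ℕ) :
    ∃ (g : ℕ × ℕ → ℕ) (w : Ultrafilter ℕ), ∀ i, Ultrafilter.map (fun j => g (i, j)) w = f i := by
  obtain ⟨w, hw⟩ := exists_map_getD_eq f 0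
  let e : List ℕ ≃ ℕ := Denumerable.eqv (List ℕ)
  refine ⟨fun p => (e.symm p.2).getD p.1 0, Ultrafilter.map e w, fun i => ?_⟩
  rw [Ultrafilter.map_map, ← hw i]
  congr 1
  funext l
  simp

theorem mem_closure_iff_exists_extend {β : Type*} {A : Set (Ultrafilter β)} (hA : A.Countable)
    {u : Ultrafilter β} :
    u ∈ closure A ↔ ∃ f : ℕ → Ultrafilter β, range f ⊆ A ∧ ∃ v, Ultrafilter.extend f v = u := by
  constructor
  · intro hu
    obtain ⟨f, rfl⟩ := hA.exists_eq_range (closure_nonempty_iff.mp ⟨u, hu⟩)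
    rw [closure_range_eq_range_extend] at hu
    exact ⟨f, subset_rfl, hu⟩
  · rintro ⟨f, hfA, v, rfl⟩
    exact closure_mono hfA (closure_range_eq_range_extend f ▸ mem_range_self v)

theorem stmt1 (u : Ultrafilter ℕ) (A : Set (Ultrafilter ℕ)) (hA : A.Countable) :
    ((u ∈ closure A ↔ ∃ f : ℕ → Ultrafilter ℕ, Set.range f ⊆ A ∧
        ∃ v : Ultrafilter ℕ, Ultrafilter.extend f v = u) ∧
      (u ∈ closure A ↔ ∃ g : ℕ × ℕ → ℕ, ∃ v w : Ultrafilter ℕ,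
        (∀ i : ℕ, Ultrafilter.map (fun j => g (i, j)) w ∈ A) ∧
        u = Ultrafilter.map g (tensor v w))) ∧
    (u ∈ closure A → ∀ f : ℕ → Ultrafilter ℕ, Set.range f = A →
      ∃ v : Ultrafilter ℕ, Ultrafilter.extend f v = u) := by
  refine ⟨⟨mem_closure_iff_exists_extend hA, (mem_closure_iff_exists_extend hA).trans ?_⟩, ?_⟩
  · constructor
    · rintro ⟨f, hfA, v, rfl⟩
      obtain ⟨g, w, hg⟩ := exists_map_section_eq f
      refine ⟨g, v, w, fun i => hg i ▸ hfA (mem_range_self i), ?_⟩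
      simp only [map_tensor_eq_extend, hg]
    · rintro ⟨g, v, w, hgA, rfl⟩
      exact ⟨_, range_subset_iff.mpr hgA, v, (map_tensor_eq_extend g v w).symm⟩
  · rintro hu f rfl
    rwa [closure_range_eq_range_extend] at hu
end

section
/- Let u ∈ βℕ be a weak P-point, n ∈ ℕ, and v₀, …, vₙ ∈ βℕ arbitrary ultrafilters. If u ≤_C v₀ ⊗ ⋯ ⊗ vₙ (the left-associated iterated tensor product, an ultrafilter on the (n+1)-fold product ℕ × ⋯ × ℕ), then u ≤_RK v_k for some 0 ≤ k ≤ n. -/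
/-- The `(n+1)`-fold left-associated product type `ℕ × ⋯ × ℕ`. -/
def iterType : ℕ → Type
  | 0 => ℕ
  | n + 1 => iterType n × ℕ

/-- The left-associated iterated tensor product `v₀ ⊗ ⋯ ⊗ vₙ`. -/
def iterTensor (v : ℕ → Ultrafilter ℕ) : (n : ℕ) → Ultrafilter (iterType n)
  | 0 => v 0
  | n + 1 => tensor (iterTensor v n) (v (n + 1))

open Filter Topology

instance iterType.countable : ∀ n, Countable (iterType n)
  | 0 => inferInstanceAs (Countable ℕ)
  | n + 1 => have := iterType.countable n; inferInstanceAs (Countable (iterType n × ℕ))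

theorem RKLE.refl {X : Type*} (u : Ultrafilter X) : RKLE u u :=
  ⟨id, Ultrafilter.map_id u⟩

theorem RKLE.trans {X Y Z : Type*} {u : Ultrafilter X} {v : Ultrafilter Y} {w : Ultrafilter Z}
    (huv : RKLE u v) (hvw : RKLE v w) : RKLE u w := by
  obtain ⟨f, rfl⟩ := huv
  obtain ⟨g, rfl⟩ := hvw
  exact ⟨f ∘ g, Ultrafilter.map_map _ _ _⟩

theorem not_rkle_pure_of_not_isPrincipal {X Y : Type*} {u : Ultrafilter X}
    (hu : ¬ IsPrincipal u) (y : Y) : ¬ RKLE u (pure y) := by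
  rintro ⟨f, hf⟩
  exact hu ⟨f y, by rw [← hf, Ultrafilter.map_pure]⟩

theorem Ultrafilter.tendsto_bind {X Y : Type*} (μ : Ultrafilter X) (f : X → Ultrafilter Y) :
    Tendsto f μ (𝓝 (μ.bind f)) :=
  (ultrafilter_converges_iff (u := μ.map f)).2 rfl

theorem rkle_of_bind_eq_of_eventually_isPrincipal {X Y : Type*} {u : Ultrafilter Y}
    {μ : Ultrafilter X} {h : X → Ultrafilter Y} (hbind : μ.bind h = u)
    (hP : ∀ᶠ x in μ, IsPrincipal (h x)) : RKLE u μ := by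
  classical
  have : Nonempty Y := ⟨(u.nonempty_of_mem univ_mem).some⟩
  let p : X → Y := fun x => if hx : IsPrincipal (h x) then hx.choose else Classical.arbitrary Y
  have hp : ∀ᶠ x in μ, h x = pure (p x) :=
    hP.mono fun x hx => by simpa only [p, dif_pos hx] using hx.choose_spec
  refine ⟨p, Ultrafilter.ext fun s => ?_⟩
  rw [← hbind]
  exact eventually_congr (hp.mono fun x hx => by
    change p x ∈ s ↔ s ∈ h x
    rw [hx, Ultrafilter.mem_pure])

namespace WeakPPoint

theorem eventually_eq_or_eventually_isPrincipal_of_bind_eq {u : Ultrafilter ℕ}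
    (hu : WeakPPoint u) {X : Type*} [Countable X] {μ : Ultrafilter X}
    {h : X → Ultrafilter ℕ} (hbind : μ.bind h = u) :
    (∀ᶠ x in μ, h x = u) ∨ ∀ᶠ x in μ, IsPrincipal (h x) := by
  by_contra! hc
  set S := {x | h x ≠ u ∧ ¬ IsPrincipal (h x)}
  have hS : S ∈ μ := hc.1.and hc.2
  refine hu.2 (h '' S) (Set.to_countable S |>.image h) ?_ ?_ ?_
  · rintro ⟨x, hx, hxu⟩
    exact hx.1 hxu
  · rintro w ⟨x, hx, rfl⟩
    exact hx.2
  · exact mem_closure_iff_ultrafilter.2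
      ⟨μ.map h, image_mem_map hS, hbind ▸ Ultrafilter.tendsto_bind μ h⟩

theorem rkle_of_rkle_bind {u : Ultrafilter ℕ} (hu : WeakPPoint u) {X Y : Type*} [Countable X]
    {μ : Ultrafilter X} {F : X → Ultrafilter Y} (h : RKLE u (μ.bind F)) :
    (∃ x, RKLE u (F x)) ∨ RKLE u μ := by
  obtain ⟨g, hg⟩ := h
  -- `map g` commutes with `bind`, so `u` is itself a bind over `μ`
  have hbind : μ.bind (fun x => (F x).map g) = u := hg
  refine (hu.eventually_eq_or_eventually_isPrincipal_of_bind_eq hbind).imp (fun hc => ?_)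
    (rkle_of_bind_eq_of_eventually_isPrincipal hbind)
  obtain ⟨x, hx⟩ := hc.exists
  exact ⟨x, g, hx⟩

theorem rkle_of_rkle_tensor {u : Ultrafilter ℕ} (hu : WeakPPoint u) {X : Type*} [Countable X]
    {μ : Ultrafilter X} {ν : Ultrafilter ℕ} (h : RKLE u (tensor μ ν)) :
    RKLE u μ ∨ RKLE u ν :=
  (hu.rkle_of_rkle_bind h).symm.imp id fun ⟨x, hx⟩ => hx.trans ⟨fun y => (x, y), rfl⟩

theorem exists_rkle_of_rkle_iterTensor {u : Ultrafilter ℕ} (hu : WeakPPoint u)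
    (v : ℕ → Ultrafilter ℕ) : ∀ n, RKLE u (iterTensor v n) → ∃ k ≤ n, RKLE u (v k)
  | 0, h => ⟨0, le_rfl, h⟩
  | n + 1, h => (hu.rkle_of_rkle_tensor h).elim
      (fun h' => (exists_rkle_of_rkle_iterTensor hu v n h').imp fun _ ⟨hk, hrk⟩ =>
        ⟨hk.trans n.le_succ, hrk⟩)
      fun h' => ⟨n + 1, le_rfl, h'⟩

end WeakPPoint

theorem UCompact.of_homeomorph {X Z W : Type*} [TopologicalSpace Z] [TopologicalSpace W]
    {μ : Ultrafilter X} (h : UCompact μ Z) (e : Z ≃ₜ W) : UCompact μ W := by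
  intro f
  obtain ⟨z, hz⟩ := h (e.symm ∘ f)
  refine ⟨e z, ?_⟩
  have : Tendsto f μ (𝓝 (e z)) := by
    simpa only [Function.comp_def, e.apply_symm_apply] using (e.continuous.tendsto z).comp hz
  exact this

theorem ucompact_subtype_of_bind_mem {X Y : Type*} {μ : Ultrafilter X}
    {S : Set (Ultrafilter Y)} (hS : ∀ f : X → Ultrafilter Y, (∀ x, f x ∈ S) → μ.bind f ∈ S) :
    UCompact μ S := fun f =>
  ⟨⟨_, hS _ fun x => (f x).2⟩, tendsto_subtype_rng.2 (Ultrafilter.tendsto_bind μ _)⟩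

theorem not_ucompact_subtype {Y : Type*} {u : Ultrafilter Y} {S : Set (Ultrafilter Y)}
    (hpure : ∀ y, pure y ∈ S) (hu : u ∉ S) : ¬ UCompact u S := by
  intro h
  obtain ⟨z, hz⟩ := h fun y => ⟨pure y, hpure y⟩
  have hz' : Tendsto pure u (𝓝 z.1) := tendsto_subtype_rng.1 hz
  exact hu (tendsto_nhds_unique (Ultrafilter.tendsto_pure_self u) hz' ▸ z.2)

theorem stmt4 (u : Ultrafilter ℕ) (hu : WeakPPoint u) (n : ℕ) (v : ℕ → Ultrafilter ℕ)
    (h : ComfortLE u (iterTensor v n)) : ∃ k ≤ n, RKLE u (v k) := by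
  by_contra! hcon
  have hμ : ¬ RKLE u (iterTensor v n) := fun hr =>
    let ⟨k, hk, hrk⟩ := hu.exists_rkle_of_rkle_iterTensor v n hr
    hcon k hk hrk
  let S : Set (Ultrafilter ℕ) := {w | ¬ RKLE u w}
  have hS : UCompact (iterTensor v n) S := ucompact_subtype_of_bind_mem fun f hf =>
    fun hr => (hu.rkle_of_rkle_bind hr).elim (fun ⟨x, hx⟩ => hf x hx) hμ
  have hSu := h (ULift S) (hS.of_homeomorph Homeomorph.ulift.symm)
  exact not_ucompact_subtype (not_rkle_pure_of_not_isPrincipal hu.1) (not_not_intro (RKLE.refl u))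
    (hSu.of_homeomorph Homeomorph.ulift)
end

section
/- Let κ and λ be cardinals with κ ≤ λ⁺, and let (P, ≤) be a partially ordered set of cardinality at most λ such that for every x ∈ P the lower cone {y ∈ P : y ≤ x} has cardinality < κ. Then for every set Λ of cardinality λ there exists a map f : P → {s ⊆ Λ : |s| < κ} such that for all x, y ∈ P, x ≤ y if and only if f(x) ⊆ f(y); i.e., (P, ≤) embeds isomorphically into the subsets of Λ of cardinality < κ ordered by inclusion. -/
universe u

theorem image_Iic_subset_image_Iic_iff {P α : Type*} [Preorder P] {g : P → α}
    (hg : Function.Injective g) {x y : P} : g '' Set.Iic x ⊆ g '' Set.Iic y ↔ x ≤ y := by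
  rw [Set.image_subset_image_iff hg, Set.Iic_subset_Iic]

theorem stmt7_general (κ lam : Cardinal.{u})
    (P : Type u) [PartialOrder P] (hP : Cardinal.mk P ≤ lam)
    (hlc : ∀ x : P, Cardinal.mk {y : P // y ≤ x} < κ)
    (Λ : Type u) (hΛ : Cardinal.mk Λ = lam) :
    ∃ f : P → Set Λ, (∀ x : P, Cardinal.mk ↥(f x) < κ) ∧
      ∀ x y : P, x ≤ y ↔ f x ⊆ f y := by
  obtain ⟨g⟩ : Nonempty (P ↪ Λ) := Cardinal.le_def P Λ |>.mp (hΛ ▸ hP)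
  refine ⟨fun x => g '' Set.Iic x, fun x => ?_, fun x y => ?_⟩
  · exact (Cardinal.mk_image_eq g.injective).trans_lt (hlc x)
  · exact (image_Iic_subset_image_Iic_iff g.injective).symm

theorem stmt7 (κ lam : Cardinal.{u}) (hκ : κ ≤ Order.succ lam)
    (P : Type u) [PartialOrder P] (hP : Cardinal.mk P ≤ lam)
    (hlc : ∀ x : P, Cardinal.mk {y : P // y ≤ x} < κ)
    (Λ : Type u) (hΛ : Cardinal.mk Λ = lam) :
    ∃ f : P → Set Λ, (∀ x : P, Cardinal.mk ↥(f x) < κ) ∧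
      ∀ x y : P, x ≤ y ↔ f x ⊆ f y :=
  stmt7_general κ lam P hP hlc Λ hΛ
end

section
/- Let κ be a cardinal, let A ⊆ βℕ have cardinality κ, let K be a type of cardinality κ, and let u ∈ βℕ. The following are equivalent: (i) u ∈ closure(A); (ii) there exist f : K → βℕ with range f ⊆ A and v ∈ Ultrafilter K such that f̃(v) = u. Moreover, if u ∈ closure(A) and f : K → βℕ satisfies range f = A, then there exists v ∈ Ultrafilter K with f̃(v) = u; and if additionally κ ≤ 2^ℵ₀, then (i) is also equivalent to: there exist g : K × ℕ → ℕ, v ∈ Ultrafilter K and w ∈ βℕ such that Ultrafilter.map (fun j => g (α, j)) w ∈ A for every α ∈ K and u = Ultrafilter.map g (v ⊗ w). -/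
/-! The closure of `A ⊆ βℕ` is the image of `Ultrafilter K` under the continuous extension of any
enumeration `K → A`: that image is compact and contains `A`, and it lies in the closure of `A`
since `pure` has dense range. For the tensor form, note that
`extend (fun α => w.map (g (α, ·))) v = (v ⊗ w).map g`, so it suffices to realize every point
`f α` of `A` as `w.map (g (α, ·))` for a single `w`. When `|K| ≤ 𝔠`, the product `K → ℕ` is
separable (Hewitt–Marczewski–Pondiczery); with a dense sequence `G`, the sets
`{n | G n α ∈ s}` (`s ∈ f α`) have the finite intersection property, and any ultrafilter `w`
containing them works with `g (α, n) = G n α`. -/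

open Set Filter Function Topology

universe u

theorem Ultrafilter.range_extend {α γ : Type*} [TopologicalSpace γ] [T2Space γ] [CompactSpace γ]
    (f : α → γ) : range (Ultrafilter.extend f) = closure (range f) := by
  refine subset_antisymm ?_ (closure_minimal ?_ (isCompact_range ?_).isClosed)
  · calc range (Ultrafilter.extend f)
        = Ultrafilter.extend f '' closure (range pure) := by
          rw [denseRange_pure.closure_range, image_univ]
      _ ⊆ closure (Ultrafilter.extend f '' range pure) :=
          image_closure_subset_closure_image (continuous_ultrafilter_extend f)
      _ = closure (range f) := by rw [← range_comp, ultrafilter_extend_extends]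
  · rintro _ ⟨a, rfl⟩
    exact ⟨pure a, ultrafilter_extend_pure f a⟩
  · exact continuous_ultrafilter_extend f

theorem Ultrafilter.extend_map_tensor {X Y Z : Type*} (g : X × Y → Z) (v : Ultrafilter X)
    (w : Ultrafilter Y) :
    Ultrafilter.extend (fun x => w.map fun y => g (x, y)) v = (tensor v w).map g := by
  rw [ultrafilter_extend_eq_iff, ultrafilter_converges_iff]
  exact Ultrafilter.ext fun _ => Iff.rfl

theorem exists_injOn_restrict_fin {K β : Type*} {ι : K → ℕ → β} {F : Set K} (hF : F.Finite)
    (hι : InjOn ι F) : ∃ k, InjOn (fun a (i : Fin k) => ι a i) F := by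
  have hsep : ∀ a b, ∃ n, ι a ≠ ι b → ι a n ≠ ι b n := fun a b => by
    by_cases h : ι a = ι b
    · exact ⟨0, fun h' => (h' h).elim⟩
    · obtain ⟨n, hn⟩ := Function.ne_iff.mp h
      exact ⟨n, fun _ => hn⟩
  choose d hd using hsep
  obtain ⟨k, hk⟩ := ((hF.prod hF).image (uncurry d)).bddAbove
  refine ⟨k + 1, fun a ha b hb hab => by_contra fun hne => ?_⟩
  have hdk : d a b ≤ k := hk ⟨(a, b), ⟨ha, hb⟩, rfl⟩
  exact hd a b (hι.ne ha hb hne) (congrFun hab ⟨d a b, by omega⟩)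

theorem separableSpace_pi_of_mk_le_continuum {K : Type u} {Z : Type*} [TopologicalSpace Z]
    [DiscreteTopology Z] [Countable Z] [Nonempty Z]
    (hK : Cardinal.mk K ≤ 2 ^ Cardinal.aleph0) : TopologicalSpace.SeparableSpace (K → Z) := by
  obtain ⟨ι⟩ : Nonempty (K ↪ (ℕ → Bool)) := by
    rw [← Cardinal.lift_mk_le'.{u, 0}]
    simpa [← Cardinal.power_def] using hK
  -- on a finite set of points, `a ↦ x a` factors through finitely many bits of the code `ι a`
  let p : (Σ k, (Fin k → Bool) → Z) → K → Z := fun σ a => σ.2 fun i => ι a i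
  refine ⟨range p, countable_range p, dense_iff_inter_open.mpr fun U hU ⟨x, hxU⟩ => ?_⟩
  obtain ⟨I, t, hxt, hIU⟩ := isOpen_pi_iff.mp hU x hxU
  obtain ⟨k, hk⟩ := exists_injOn_restrict_fin I.finite_toSet ι.injective.injOn
  let r : I → Fin k → Bool := fun a i => ι a i
  have hr : Injective r := injOn_iff_injective.mp hk
  let σ : (Fin k → Bool) → Z := extend r (fun a => x a) (Classical.arbitrary _)
  have hσ : ∀ a ∈ I, σ (fun i => ι a i) = x a := fun a ha => hr.extend_apply _ _ ⟨a, ha⟩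
  refine ⟨p ⟨k, σ⟩, hIU fun a ha => ?_, mem_range_self _⟩
  change σ (fun i => ι a i) ∈ t a
  exact (hσ a ha).symm ▸ (hxt a ha).2

theorem DenseRange.exists_ultrafilter_map_eval_eq {Y K Z : Type*} [TopologicalSpace Z]
    [DiscreteTopology Z] {G : Y → K → Z} (hG : DenseRange G) (E : K → Ultrafilter Z) :
    ∃ w : Ultrafilter Y, ∀ a, w.map (fun y => G y a) = E a := by
  let F : Filter Y := comap G (Filter.pi fun a => (E a : Filter Z))
  have : F.NeBot := by
    refine comap_neBot fun s hs => ?_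
    obtain ⟨I, hI, t, ht, hIs⟩ := mem_pi.mp hs
    have hopen : IsOpen (I.pi t) := isOpen_set_pi hI fun a _ => isOpen_discrete (t a)
    have hnonempty : (I.pi t).Nonempty :=
      pi_nonempty_iff.mpr fun a => ((E a).nonempty_of_mem (ht a)).imp fun _ h _ => h
    obtain ⟨y, hy⟩ := hG.exists_mem_open hopen hnonempty
    exact ⟨y, hIs hy⟩
  refine ⟨Ultrafilter.of F, fun a => Ultrafilter.coe_le_coe.mp ?_⟩
  calc (Ultrafilter.map (fun y => G y a) (Ultrafilter.of F) : Filter Z)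
      ≤ map (eval a ∘ G) F := map_mono (Ultrafilter.of_le _)
    _ ≤ E a := (tendsto_eval_pi _ a).comp tendsto_comap

theorem stmt18 (κ : Cardinal) (A : Set (Ultrafilter ℕ)) (hA : Cardinal.mk ↥A = κ)
    (K : Type) (hK : Cardinal.mk K = κ) (u : Ultrafilter ℕ) :
    (u ∈ closure A ↔ ∃ f : K → Ultrafilter ℕ, Set.range f ⊆ A ∧
        ∃ v : Ultrafilter K, Ultrafilter.extend f v = u) ∧
    (u ∈ closure A → ∀ f : K → Ultrafilter ℕ, Set.range f = A →
        ∃ v : Ultrafilter K, Ultrafilter.extend f v = u) ∧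
    (κ ≤ (2 : Cardinal) ^ Cardinal.aleph0 →
      (u ∈ closure A ↔ ∃ g : K × ℕ → ℕ, ∃ v : Ultrafilter K, ∃ w : Ultrafilter ℕ,
        (∀ α : K, Ultrafilter.map (fun j => g (α, j)) w ∈ A) ∧
        u = Ultrafilter.map g (tensor v w))) := by
  subst hA
  obtain ⟨e⟩ : Nonempty (K ≃ A) := Cardinal.eq.mp hK
  have hrange : range (Subtype.val ∘ e) = A := by
    rw [e.surjective.range_comp, Subtype.range_coe]
  have extend_of_range_eq : u ∈ closure A → ∀ f : K → Ultrafilter ℕ, range f = A →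
      ∃ v : Ultrafilter K, Ultrafilter.extend f v = u := by
    intro hu f hf
    rwa [← hf, ← Ultrafilter.range_extend] at hu
  have mem_closure_of_extend {f : K → Ultrafilter ℕ} (hf : range f ⊆ A) (v : Ultrafilter K) :
      Ultrafilter.extend f v ∈ closure A :=
    closure_mono hf (Ultrafilter.range_extend f ▸ mem_range_self v)
  refine ⟨⟨fun hu => ?_, fun ⟨f, hf, v, hv⟩ => hv ▸ mem_closure_of_extend hf v⟩,
    extend_of_range_eq, fun hκ => ⟨fun hu => ?_, ?_⟩⟩
  · obtain ⟨v, hv⟩ := extend_of_range_eq hu _ hrange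
    exact ⟨_, hrange.le, v, hv⟩
  · have := separableSpace_pi_of_mk_le_continuum (Z := ℕ) (hK.le.trans hκ)
    obtain ⟨G, hG⟩ := TopologicalSpace.exists_dense_seq (K → ℕ)
    obtain ⟨w, hw⟩ := hG.exists_ultrafilter_map_eval_eq (Subtype.val ∘ e)
    obtain ⟨v, rfl⟩ := extend_of_range_eq hu _ hrange
    refine ⟨fun p => G p.2 p.1, v, w, fun a => hw a ▸ (e a).2, ?_⟩
    rw [← Ultrafilter.extend_map_tensor]
    simp only [hw]
  · rintro ⟨g, v, w, hg, rfl⟩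
    rw [← Ultrafilter.extend_map_tensor]
    exact mem_closure_of_extend (range_subset_iff.mpr hg) v
end
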